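/- (Theorem A, algebraic form.) Let a ∈ ℝ[z₁,…,z_d] satisfy the zero condition of order one: a(1,…,1) = 2^d and a(ε) = 0 for every ε ∈ Z'. Then there exist polynomials c_Θ ∈ ℝ[z₁,…,z_d], indexed by the finitely many d×d integer matrices Θ whose columns are 0-1 vectors with exactly one or two entries equal to 1 and with det Θ = ±1, such that a = Σ_Θ c_Θ · 2^d · q_Θ and Σ_Θ c_Θ(1,…,1) = 1. -/

import Mathlib

/-!
Let `J` be the ideal generated by the `2^d q_Θ`. It suffices to show `a ∈ J`: evaluating
`a = Σ c_Θ 2^d q_Θ` at `(1,…,1)`, where every `q_Θ` equals `1`, then gives `Σ c_Θ(1,…,1) = 1`.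
The identity matrix puts `∏ (1 + z_c)` into `J`, and this agrees with `a` on the whole grid
`{±1}^d`, so by the combinatorial Nullstellensatz it suffices that `z_k² - 1 ∈ J` for every `k`.

Since `1 + z_c` and `z_c (z_c - 1)` are coprime, `z_k² - 1 ∈ J` follows once
`(z_k² - 1) ∏_{c ∈ W} z_c (z_c - 1) ∏_{c ∉ W ∪ {k}} (1 + z_c) ∈ J` for every `W ∌ k`.
Thread `W` into a chain `τ` ending at `k`. The matrices whose column `c` is `e_c + e_{τ c}` for
`c ∈ U ⊆ W` and `e_c` otherwise are unitriangular, and inclusion–exclusion over `U` puts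
`∏_{c ∈ W} z_c (z_{τ c} - 1) ∏_{c ∉ W} (1 + z_c)` into `J`; this telescopes to a divisor of
the required element.
-/

open MvPolynomial

/-- For a `d×d` integer matrix `Θ` with 0-1 columns, the polynomial
`q_Θ(z) = ∏_{columns θ of Θ} (1 + z^θ)/2`, where `z^θ = z₁^{θ₁}⋯z_d^{θ_d}`. -/
noncomputable def qpoly {d : ℕ} (Θ : Matrix (Fin d) (Fin d) ℤ) : MvPolynomial (Fin d) ℝ :=
  ∏ c : Fin d, (C (1 / 2 : ℝ) * (1 + ∏ i : Fin d, X i ^ (Θ i c).toNat))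

open Finset

section IdealLemmas

variable {ι R : Type*} [CommRing R] [DecidableEq ι] {I : Ideal R}

theorem Ideal.prod_sub_mul_prod_sdiff_mem (A B : ι → R) {s W : Finset ι} (hW : W ⊆ s)
    (h : ∀ U ⊆ W, (∏ c ∈ U, B c) * ∏ c ∈ s \ U, A c ∈ I) :
    (∏ c ∈ W, (B c - A c)) * ∏ c ∈ s \ W, A c ∈ I := by
  simp_rw [sub_eq_add_neg]
  rw [prod_add, sum_mul]
  refine I.sum_mem fun U hU => ?_
  have hUW := mem_powerset.mp hU
  have hsplit : (∏ c ∈ U, B c) * (∏ c ∈ W \ U, -A c) * ∏ c ∈ s \ W, A c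
      = (-1) ^ #(W \ U) * ((∏ c ∈ U, B c) * ∏ c ∈ s \ U, A c) := by
    rw [prod_neg, ← sdiff_union_sdiff_cancel hW hUW,
      prod_union (sdiff_disjoint.mono_right sdiff_subset)]
    ring
  rw [hsplit]
  exact I.mul_mem_left _ (h U hUW)

theorem Ideal.mem_of_forall_mul_prod_mem {x : R} (A B : ι → R) (s : Finset ι)
    (hAB : ∀ c ∈ s, IsCoprime (A c) (B c))
    (h : ∀ W ⊆ s, x * ((∏ c ∈ W, B c) * ∏ c ∈ s \ W, A c) ∈ I) : x ∈ I := by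
  choose! u v huv using hAB
  have hx : x = ∑ W ∈ s.powerset,
      (∏ c ∈ W, v c) * (∏ c ∈ s \ W, u c) * (x * ((∏ c ∈ W, B c) * ∏ c ∈ s \ W, A c)) := by
    calc x = x * ∏ c ∈ s, (v c * B c + u c * A c) := by
          rw [prod_congr rfl fun c hc => (add_comm _ _).trans (huv c hc), prod_const_one,
            mul_one]
      _ = _ := by
          rw [prod_add, mul_sum]
          refine sum_congr rfl fun W _ => ?_
          simp_rw [prod_mul_distrib]
          ring
  rw [hx]
  exact I.sum_mem fun W hW => I.mul_mem_left _ (h W (mem_powerset.mp hW))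

end IdealLemmas

theorem Matrix.det_eq_prod_diag_of_blockTriangular_of_injective {m α R : Type*} [Fintype m]
    [DecidableEq m] [CommRing R] [LinearOrder α] {M : Matrix m m R} {b : m → α}
    (hb : Function.Injective b) (hM : M.BlockTriangular b) : M.det = ∏ i, M i i := by
  rw [hM.det, prod_image hb.injOn]
  refine prod_congr rfl fun i _ => ?_
  let _ : Unique {j // b j = b i} := ⟨⟨⟨i, rfl⟩⟩, fun j => Subtype.ext (hb j.2)⟩
  rw [Matrix.det_unique, Matrix.toSquareBlock_def]
  rfl

/-- `τ` runs through `W` in increasing `κ`-order and then to `j`, so the product telescopes. -/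
theorem exists_chain_prod_dvd {ι α M : Type*} [DecidableEq ι] [LinearOrder α] [CommMonoid M]
    {κ : ι → α} (hκ : Function.Injective κ) (f : ι → M) (W : Finset ι) :
    ∀ j, (∀ c ∈ W, κ c < κ j) →
      ∃ τ : ι → ι, (∀ c ∈ W, κ c < κ (τ c)) ∧ ∏ c ∈ W, f (τ c) ∣ f j * ∏ c ∈ W, f c := by
  induction W using Finset.induction_on_max_value κ with
  | empty => exact fun j _ => ⟨id, by simp⟩
  | insert a s has hmax ih =>
    intro j hj
    have hsa : ∀ c ∈ s, κ c < κ a := fun c hc =>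
      (hmax c hc).lt_of_ne fun h => has (by rwa [← hκ h])
    obtain ⟨τ, hτ, hdvd⟩ := ih a hsa
    have hτ' : ∀ c ∈ s, Function.update τ a j c = τ c := fun c hc =>
      Function.update_of_ne (ne_of_mem_of_not_mem hc has) _ _
    refine ⟨Function.update τ a j, ?_, ?_⟩
    · intro c hc
      rcases mem_insert.mp hc with rfl | hc
      · simpa using hj c (mem_insert_self c s)
      · rw [hτ' c hc]; exact hτ c hc
    · rw [prod_insert has, prod_insert has, Function.update_self, prod_congr rfl
        fun c hc => congrArg f (hτ' c hc)]
      exact mul_dvd_mul_left _ hdvd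

section AdmissibleIdeal

variable {d : ℕ}

def IsAdmissible (Θ : Matrix (Fin d) (Fin d) ℤ) : Prop :=
  (∀ i j, Θ i j = 0 ∨ Θ i j = 1) ∧
  (∀ j, (∑ i, Θ i j) = 1 ∨ (∑ i, Θ i j) = 2) ∧
  (Θ.det = 1 ∨ Θ.det = -1)

noncomputable def qsymbol (Θ : Matrix (Fin d) (Fin d) ℤ) : MvPolynomial (Fin d) ℝ :=
  2 ^ d * qpoly Θ

noncomputable def admissibleIdeal (d : ℕ) : Ideal (MvPolynomial (Fin d) ℝ) :=
  Ideal.span (qsymbol '' {Θ | IsAdmissible Θ})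

theorem qsymbol_mem_admissibleIdeal {Θ : Matrix (Fin d) (Fin d) ℤ} (hΘ : IsAdmissible Θ) :
    qsymbol Θ ∈ admissibleIdeal d :=
  Ideal.subset_span ⟨Θ, hΘ, rfl⟩

theorem finite_setOf_isAdmissible : {Θ : Matrix (Fin d) (Fin d) ℤ | IsAdmissible Θ}.Finite := by
  refine (Set.Finite.pi fun _ => Set.Finite.pi fun _ => Set.toFinite {0, 1}).subset ?_
  intro Θ hΘ i _ j _
  simpa using hΘ.1 i j

theorem eval_one_qpoly (Θ : Matrix (Fin d) (Fin d) ℤ) :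
    eval (fun _ => (1 : ℝ)) (qpoly Θ) = 1 := by
  simp only [qpoly, map_prod, map_mul, map_add, eval_C, map_one, map_pow, eval_X, one_pow,
    prod_const_one]
  norm_num

def indicatorMatrix (t : Fin d → Finset (Fin d)) : Matrix (Fin d) (Fin d) ℤ :=
  Matrix.of fun i c => if i ∈ t c then 1 else 0

theorem qsymbol_indicatorMatrix (t : Fin d → Finset (Fin d)) :
    qsymbol (indicatorMatrix t) = ∏ c, (1 + ∏ i ∈ t c, X i) := by
  have two_pow : (2 : MvPolynomial (Fin d) ℝ) ^ d = ∏ _c : Fin d, 2 := by simp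
  have two_mul_half : (2 : MvPolynomial (Fin d) ℝ) * C (1 / 2) = 1 := by
    rw [← map_ofNat C 2, ← C_mul]; norm_num
  rw [qsymbol, qpoly, two_pow, ← prod_mul_distrib]
  refine prod_congr rfl fun c _ => ?_
  have hcol : ∀ i, X i ^ (indicatorMatrix t i c).toNat
      = if i ∈ t c then (X i : MvPolynomial (Fin d) ℝ) else 1 := fun i => by
    by_cases hi : i ∈ t c <;> simp [indicatorMatrix, hi]
  simp only [hcol, prod_ite_mem, univ_inter, ← mul_assoc, two_mul_half, one_mul]

theorem isAdmissible_indicatorMatrix {t : Fin d → Finset (Fin d)}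
    (hcard : ∀ c, #(t c) = 1 ∨ #(t c) = 2)
    (hdet : (indicatorMatrix t).det = 1 ∨ (indicatorMatrix t).det = -1) :
    IsAdmissible (indicatorMatrix t) := by
  refine ⟨fun i c => ?_, fun c => ?_, hdet⟩
  · by_cases hi : i ∈ t c <;> simp [indicatorMatrix, hi]
  · simp only [indicatorMatrix, Matrix.of_apply, sum_boole, filter_mem_eq_inter, univ_inter]
    exact_mod_cast hcard c

def edgeMatrix (τ : Fin d → Fin d) (U : Finset (Fin d)) : Matrix (Fin d) (Fin d) ℤ :=
  indicatorMatrix fun c => if c ∈ U then {c, τ c} else {c}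

theorem det_edgeMatrix {α : Type*} [LinearOrder α] {κ : Fin d → α} (hκ : Function.Injective κ)
    {τ : Fin d → Fin d} {U : Finset (Fin d)} (hU : ∀ c ∈ U, κ c < κ (τ c)) :
    (edgeMatrix τ U).det = 1 := by
  have htri : (edgeMatrix τ U).BlockTriangular (OrderDual.toDual ∘ κ) := by
    intro i c hic
    have hci : κ i < κ c := hic
    have hne : i ≠ c := fun h => hci.ne (congrArg κ h)
    by_cases hc : c ∈ U
    · have : i ≠ τ c := fun h => (hU c hc).not_gt (h ▸ hci)
      simp [edgeMatrix, indicatorMatrix, hc, hne, this]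
    · simp [edgeMatrix, indicatorMatrix, hc, hne]
  rw [Matrix.det_eq_prod_diag_of_blockTriangular_of_injective
    (OrderDual.toDual.injective.comp hκ) htri]
  refine prod_eq_one fun c _ => ?_
  by_cases hc : c ∈ U <;> simp [edgeMatrix, indicatorMatrix, hc]

theorem isAdmissible_edgeMatrix {α : Type*} [LinearOrder α] {κ : Fin d → α}
    (hκ : Function.Injective κ) {τ : Fin d → Fin d} {U : Finset (Fin d)}
    (hU : ∀ c ∈ U, κ c < κ (τ c)) : IsAdmissible (edgeMatrix τ U) := by
  refine isAdmissible_indicatorMatrix (fun c => ?_) (Or.inl (det_edgeMatrix hκ hU))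
  split <;> simp

theorem qsymbol_edgeMatrix {τ : Fin d → Fin d} {U : Finset (Fin d)} (hτ : ∀ c ∈ U, c ≠ τ c) :
    qsymbol (edgeMatrix τ U) = (∏ c ∈ U, (1 + X c * X (τ c))) * ∏ c ∈ univ \ U, (1 + X c) := by
  rw [edgeMatrix, qsymbol_indicatorMatrix, ← prod_mul_prod_compl U, compl_eq_univ_sdiff]
  congr 1
  · refine prod_congr rfl fun c hc => ?_
    rw [if_pos hc, prod_pair (hτ c hc)]
  · refine prod_congr rfl fun c hc => ?_
    rw [if_neg (mem_sdiff.mp hc).2, prod_singleton]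

theorem prod_X_mul_X_sub_one_mem_admissibleIdeal {α : Type*} [LinearOrder α] {κ : Fin d → α}
    (hκ : Function.Injective κ) {τ : Fin d → Fin d} {W : Finset (Fin d)}
    (hW : ∀ c ∈ W, κ c < κ (τ c)) :
    (∏ c ∈ W, X c * (X (τ c) - 1)) * ∏ c ∈ univ \ W, (1 + X c) ∈ admissibleIdeal d := by
  have hdiff : ∏ c ∈ W, (X c * (X (τ c) - 1) : MvPolynomial (Fin d) ℝ)
      = ∏ c ∈ W, ((1 + X c * X (τ c)) - (1 + X c)) := prod_congr rfl fun c _ => by ring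
  rw [hdiff]
  refine Ideal.prod_sub_mul_prod_sdiff_mem _ _ (subset_univ W) fun U hU => ?_
  have hUκ : ∀ c ∈ U, κ c < κ (τ c) := fun c hc => hW c (hU hc)
  rw [← qsymbol_edgeMatrix fun c hc => (hUκ c hc).ne ∘ congrArg κ]
  exact qsymbol_mem_admissibleIdeal (isAdmissible_edgeMatrix hκ hUκ)

theorem sq_sub_one_mem_admissibleIdeal (k : Fin d) : X k ^ 2 - 1 ∈ admissibleIdeal d := by
  set s := univ.erase k
  refine Ideal.mem_of_forall_mul_prod_mem (fun c => 1 + X c) (fun c => X c * (X c - 1)) s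
    (fun c _ => ⟨C 2⁻¹ * (2 - X c), C 2⁻¹, ?_⟩) fun W hW => ?_
  · have : (C 2⁻¹ : MvPolynomial (Fin d) ℝ) * 2 = 1 := by
      rw [← map_ofNat C 2, ← C_mul]; norm_num
    linear_combination this
  -- an order in which `k` comes last, so that a chain through `W` can end at `k`
  let κ : Fin d → ℕ := fun i => if i = k then d else i
  have hκ : Function.Injective κ := fun i j h => by
    simp only [κ] at h
    split_ifs at h <;> omega
  have hWk : ∀ c ∈ W, κ c < κ k := fun c hc => by
    simp [κ, ne_of_mem_erase (hW hc)]
  obtain ⟨τ, hτ, r, hr⟩ :=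
    exists_chain_prod_dvd hκ (fun c => (X c - 1 : MvPolynomial (Fin d) ℝ)) W k hWk
  refine Ideal.mem_of_dvd _ ⟨r, ?_⟩ (prod_X_mul_X_sub_one_mem_admissibleIdeal hκ hτ)
  have hcompl : univ \ W = insert k (s \ W) := by
    ext c
    by_cases hc : c = k <;> simp [s, hc]
    exact fun h => ne_of_mem_erase (hW h) rfl
  rw [hcompl, prod_insert (by simp [s]), prod_mul_distrib, prod_mul_distrib]
  linear_combination (X k + 1) * (∏ c ∈ W, X c) * (∏ c ∈ s \ W, (1 + X c)) * hr

theorem mem_span_sq_sub_one_of_eval_eq_zero {b : MvPolynomial (Fin d) ℝ}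
    (hb : ∀ ε : Fin d → ℝ, (∀ i, ε i = -1 ∨ ε i = 1) → eval ε b = 0) :
    b ∈ Ideal.span (Set.range fun i => X i ^ 2 - 1) := by
  obtain ⟨h, -, rfl⟩ := combinatorial_nullstellensatz_exists_linearCombination
    (fun _ => {-1, 1}) (fun _ => insert_nonempty _ _) b
    fun ε hε => hb ε fun i => by simpa using hε i
  rw [Finsupp.linearCombination_apply]
  refine Submodule.finsuppSum_mem _ _ _ _ fun i _ =>
    Submodule.smul_mem _ _ (Ideal.subset_span ⟨i, ?_⟩)
  rw [prod_pair (by norm_num)]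
  simp only [map_neg, map_one, sub_neg_eq_add]
  ring

theorem mem_admissibleIdeal_of_zero_condition {a : MvPolynomial (Fin d) ℝ}
    (h1 : eval (fun _ => (1 : ℝ)) a = 2 ^ d)
    (h0 : ∀ ε : Fin d → ℝ, (∀ i, ε i = -1 ∨ ε i = 1) → ε ≠ (fun _ => 1) → eval ε a = 0) :
    a ∈ admissibleIdeal d := by
  have hid : ∏ c, (1 + X c) ∈ admissibleIdeal d := by
    simpa using prod_X_mul_X_sub_one_mem_admissibleIdeal (τ := id) (W := ∅)
      Fin.val_injective (by simp)
  have hrest : a - ∏ c, (1 + X c) ∈ admissibleIdeal d := by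
    refine Ideal.span_le.mpr ?_ (mem_span_sq_sub_one_of_eval_eq_zero fun ε hε => ?_)
    · rintro _ ⟨k, rfl⟩
      exact sq_sub_one_mem_admissibleIdeal k
    rw [map_sub, map_prod]
    simp only [map_add, map_one, eval_X]
    by_cases hε1 : ε = fun _ => 1
    · subst hε1
      norm_num [h1]
    · obtain ⟨i, hi⟩ : ∃ i, ε i = -1 := by
        by_contra! hne
        exact hε1 (funext fun i => (hε i).resolve_left (hne i))
      rw [h0 ε hε hε1, prod_eq_zero (mem_univ i) (by rw [hi]; norm_num), sub_zero]
  simpa using add_mem hrest hid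

end AdmissibleIdeal

theorem stmt_8_general (d : ℕ) (a : MvPolynomial (Fin d) ℝ)
    (h1 : eval (fun _ => (1 : ℝ)) a = 2 ^ d)
    (h0 : ∀ ε : Fin d → ℝ, (∀ i, ε i = -1 ∨ ε i = 1) → ε ≠ (fun _ => 1) →
      eval ε a = 0) :
    ∃ (S : Finset (Matrix (Fin d) (Fin d) ℤ))
      (c : Matrix (Fin d) (Fin d) ℤ → MvPolynomial (Fin d) ℝ),
      (∀ Θ, Θ ∈ S ↔
        ((∀ i j, Θ i j = 0 ∨ Θ i j = 1) ∧
         (∀ j, (∑ i, Θ i j) = 1 ∨ (∑ i, Θ i j) = 2) ∧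
         (Θ.det = 1 ∨ Θ.det = -1))) ∧
      a = ∑ Θ ∈ S, c Θ * (2 : MvPolynomial (Fin d) ℝ) ^ d * qpoly Θ ∧
      (∑ Θ ∈ S, eval (fun _ => (1 : ℝ)) (c Θ)) = 1 := by
  set S := (finite_setOf_isAdmissible (d := d)).toFinset
  have ha : a ∈ Ideal.span (qsymbol '' (S : Set (Matrix (Fin d) (Fin d) ℤ))) := by
    rw [Set.Finite.coe_toFinset]
    exact mem_admissibleIdeal_of_zero_condition h1 h0
  obtain ⟨c, hc⟩ := (Submodule.mem_span_image_finset_iff_exists_fun' _).mp ha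
  have ha_eq : a = ∑ Θ ∈ S, c Θ * (2 : MvPolynomial (Fin d) ℝ) ^ d * qpoly Θ := by
    simp only [← hc, smul_eq_mul, qsymbol, mul_assoc]
  refine ⟨S, c, fun Θ => Set.Finite.mem_toFinset _, ha_eq, ?_⟩
  have heval := congrArg (eval fun _ => (1 : ℝ)) ha_eq
  simp only [h1, map_sum, map_mul, map_pow, map_ofNat, eval_one_qpoly, mul_one,
    ← sum_mul] at heval
  exact (mul_eq_right₀ (pow_ne_zero d two_ne_zero)).mp heval.symm

/-- Theorem A (algebraic form): if `a` satisfies the zero condition of order one, i.e.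
`a(1,…,1) = 2^d` and `a(ε) = 0` for all `ε ∈ Z' = {−1,1}^d \ {(1,…,1)}`, then
`a = Σ_Θ c_Θ · 2^d · q_Θ` with `Σ_Θ c_Θ(1,…,1) = 1`, the (finite) index set consisting of
all `d×d` integer matrices `Θ` whose columns are 0-1 vectors with exactly one or two ones
and with `det Θ = ±1`. -/
theorem stmt_8 (d : ℕ) (hd : 1 ≤ d) (a : MvPolynomial (Fin d) ℝ)
    (h1 : eval (fun _ => (1 : ℝ)) a = 2 ^ d)
    (h0 : ∀ ε : Fin d → ℝ, (∀ i, ε i = -1 ∨ ε i = 1) → ε ≠ (fun _ => 1) →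
      eval ε a = 0) :
    ∃ (S : Finset (Matrix (Fin d) (Fin d) ℤ))
      (c : Matrix (Fin d) (Fin d) ℤ → MvPolynomial (Fin d) ℝ),
      (∀ Θ, Θ ∈ S ↔
        ((∀ i j, Θ i j = 0 ∨ Θ i j = 1) ∧
         (∀ j, (∑ i, Θ i j) = 1 ∨ (∑ i, Θ i j) = 2) ∧
         (Θ.det = 1 ∨ Θ.det = -1))) ∧
      a = ∑ Θ ∈ S, c Θ * (2 : MvPolynomial (Fin d) ℝ) ^ d * qpoly Θ ∧
      (∑ Θ ∈ S, eval (fun _ => (1 : ℝ)) (c Θ)) = 1 :=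
  stmt_8_general d a h1 h0
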